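/- arXiv:2112.11024 — 6 statements merged into one kernel-verified Lean document; each statement's English description precedes it below -/
import Mathlib

section
/- Let H and M be disjoint finite sets with vote counts κ ≥ 0 and reputation scores p ∈ [0,1], separated by a threshold t ∈ [0,1] (p_x > t for x ∈ H, p_y ≤ t for y ∈ M), and suppose Σ_{x∈H} κ_x = 2·Σ_{y∈M} κ_y. Define the honest vote loss 𝓛^H = Σ_{x∈H} κ_x − Σ_{x∈H} p_x·κ_x and the malicious vote loss 𝓛^M = Σ_{y∈M} κ_y − Σ_{y∈M} p_y·κ_y. Then 𝓛^H ≤ 2·𝓛^M; the loss of votes in the honest validator set is at most twice the loss in the malicious validator set. -/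
/-- The loss of votes in the honest validator set is at most twice the loss in
the malicious validator set: `𝓛ᴴ ≤ 2·𝓛ᴹ`. -/
theorem honest_vote_loss_le_twice_malicious
    {α : Type*} [DecidableEq α] (H M : Finset α) (hdisj : Disjoint H M)
    (κ p : α → ℝ)
    (hκ : ∀ x ∈ H ∪ M, 0 ≤ κ x)
    (hp0 : ∀ x ∈ H ∪ M, 0 ≤ p x) (hp1 : ∀ x ∈ H ∪ M, p x ≤ 1)
    (t : ℝ) (ht0 : 0 ≤ t) (ht1 : t ≤ 1)
    (hH : ∀ x ∈ H, t < p x) (hM : ∀ y ∈ M, p y ≤ t)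
    (hvotes : ∑ x ∈ H, κ x = 2 * ∑ y ∈ M, κ y) :
    (∑ x ∈ H, κ x) - ∑ x ∈ H, p x * κ x ≤
      2 * ((∑ y ∈ M, κ y) - ∑ y ∈ M, p y * κ y) := by
  have h1 : (∑ x ∈ H, κ x) - ∑ x ∈ H, p x * κ x = ∑ x ∈ H, (1 - p x) * κ x := by
    rw [← Finset.sum_sub_distrib]; apply Finset.sum_congr rfl; intro x _; ring
  have h2 : (∑ y ∈ M, κ y) - ∑ y ∈ M, p y * κ y = ∑ y ∈ M, (1 - p y) * κ y := by
    rw [← Finset.sum_sub_distrib]; apply Finset.sum_congr rfl; intro x _; ring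
  rw [h1, h2]
  have hA : ∑ x ∈ H, (1 - p x) * κ x ≤ (1 - t) * ∑ x ∈ H, κ x := by
    rw [Finset.mul_sum]
    apply Finset.sum_le_sum
    intro x hx
    exact mul_le_mul_of_nonneg_right (by linarith [hH x hx])
      (hκ x (Finset.mem_union_left _ hx))
  have hB : (1 - t) * ∑ y ∈ M, κ y ≤ ∑ y ∈ M, (1 - p y) * κ y := by
    rw [Finset.mul_sum]
    apply Finset.sum_le_sum
    intro y hy
    exact mul_le_mul_of_nonneg_right (by linarith [hM y hy])
      (hκ y (Finset.mem_union_right _ hy))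
  calc ∑ x ∈ H, (1 - p x) * κ x ≤ (1 - t) * ∑ x ∈ H, κ x := hA
    _ = 2 * ((1 - t) * ∑ y ∈ M, κ y) := by rw [hvotes]; ring
    _ ≤ 2 * ∑ y ∈ M, (1 - p y) * κ y := by linarith
end

section
/- Let H and M be disjoint finite sets with vote counts κ ≥ 0 and reputation scores p ∈ [0,1], separated by a threshold t ∈ [0,1] (p_x > t for x ∈ H, p_y ≤ t for y ∈ M), with Σ_{x∈H} κ_x = 2·Σ_{y∈M} κ_y. Set 𝒱^H = Σ_{x∈H} p_x·κ_x, 𝒱^M = Σ_{y∈M} p_y·κ_y, 𝓛^H = Σ_{x∈H} κ_x − 𝒱^H, 𝓛^M = Σ_{y∈M} κ_y − 𝒱^M, and Δ𝓛 = 2·𝓛^M − 𝓛^H. If 𝒱^M > 0, then 𝒱^H/𝒱^M = 2 + Δ𝓛/𝒱^M with Δ𝓛/𝒱^M ≥ 0; in particular 𝒱^H/𝒱^M ≥ 2, i.e. the ratio of honest to malicious effective validator votes increases above the originally assumed factor of 2 by the relative loss difference L̂ = Δ𝓛/𝒱^M. (Lemma 2.) -/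
/-!
Since every honest reputation exceeds `t` and every malicious one is at most `t`, the honest
effective votes are at least `t · Σ_H κ = 2t · Σ_M κ`, while the malicious ones are at most
`t · Σ_M κ`; hence `𝒱ᴴ ≥ 2𝒱ᴹ`. Because `Σ_H κ = 2 Σ_M κ`, the loss difference `Δ𝓛 = 2𝓛ᴹ - 𝓛ᴴ` is exactly
`𝒱ᴴ - 2𝒱ᴹ`, which gives both the identity and its nonnegativity.
-/

open Finset

section VoteAccounting

variable {α : Type*} (s H M : Finset α) (κ p : α → ℝ)

def effectiveVotes : ℝ := ∑ x ∈ s, p x * κ x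

def voteLoss : ℝ := ∑ x ∈ s, κ x - effectiveVotes s κ p

variable {s H M κ p}

theorem effectiveVotes_le_mul_sum {t : ℝ} (hκ : ∀ x ∈ s, 0 ≤ κ x) (hp : ∀ x ∈ s, p x ≤ t) :
    effectiveVotes s κ p ≤ t * ∑ x ∈ s, κ x := by
  rw [mul_sum]
  exact sum_le_sum fun x hx => mul_le_mul_of_nonneg_right (hp x hx) (hκ x hx)

theorem mul_sum_le_effectiveVotes {t : ℝ} (hκ : ∀ x ∈ s, 0 ≤ κ x) (hp : ∀ x ∈ s, t ≤ p x) :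
    t * ∑ x ∈ s, κ x ≤ effectiveVotes s κ p := by
  rw [mul_sum]
  exact sum_le_sum fun x hx => mul_le_mul_of_nonneg_right (hp x hx) (hκ x hx)

theorem mul_effectiveVotes_le_of_threshold {c t : ℝ} (hc : 0 ≤ c)
    (hκH : ∀ x ∈ H, 0 ≤ κ x) (hκM : ∀ x ∈ M, 0 ≤ κ x)
    (hH : ∀ x ∈ H, t ≤ p x) (hM : ∀ y ∈ M, p y ≤ t)
    (hvotes : ∑ x ∈ H, κ x = c * ∑ y ∈ M, κ y) :
    c * effectiveVotes M κ p ≤ effectiveVotes H κ p :=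
  calc c * effectiveVotes M κ p ≤ c * (t * ∑ y ∈ M, κ y) :=
        mul_le_mul_of_nonneg_left (effectiveVotes_le_mul_sum hκM hM) hc
    _ = t * ∑ x ∈ H, κ x := by rw [hvotes]; ring
    _ ≤ effectiveVotes H κ p := mul_sum_le_effectiveVotes hκH hH

theorem mul_voteLoss_sub_voteLoss {c : ℝ} (hvotes : ∑ x ∈ H, κ x = c * ∑ y ∈ M, κ y) :
    c * voteLoss M κ p - voteLoss H κ p = effectiveVotes H κ p - c * effectiveVotes M κ p := by
  rw [voteLoss, voteLoss, hvotes]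
  ring

theorem effectiveVotes_div_eq_add_voteLoss_div {c : ℝ}
    (hvotes : ∑ x ∈ H, κ x = c * ∑ y ∈ M, κ y) (hVM : effectiveVotes M κ p ≠ 0) :
    effectiveVotes H κ p / effectiveVotes M κ p =
      c + (c * voteLoss M κ p - voteLoss H κ p) / effectiveVotes M κ p := by
  rw [mul_voteLoss_sub_voteLoss hvotes]
  field_simp
  ring

end VoteAccounting

theorem lemma2_honest_malicious_vote_ratio_general
    {α : Type*} [DecidableEq α] (H M : Finset α)
    (κ p : α → ℝ)
    (hκ : ∀ x ∈ H ∪ M, 0 ≤ κ x)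
    (t : ℝ)
    (hH : ∀ x ∈ H, t < p x) (hM : ∀ y ∈ M, p y ≤ t)
    (hvotes : ∑ x ∈ H, κ x = 2 * ∑ y ∈ M, κ y)
    (hVM : 0 < ∑ y ∈ M, p y * κ y) :
    (∑ x ∈ H, p x * κ x) / (∑ y ∈ M, p y * κ y) =
        2 + (2 * ((∑ y ∈ M, κ y) - ∑ y ∈ M, p y * κ y) -
              ((∑ x ∈ H, κ x) - ∑ x ∈ H, p x * κ x)) /
            (∑ y ∈ M, p y * κ y) ∧
      0 ≤ (2 * ((∑ y ∈ M, κ y) - ∑ y ∈ M, p y * κ y) -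
            ((∑ x ∈ H, κ x) - ∑ x ∈ H, p x * κ x)) /
          (∑ y ∈ M, p y * κ y) ∧
      2 ≤ (∑ x ∈ H, p x * κ x) / (∑ y ∈ M, p y * κ y) := by
  change effectiveVotes H κ p / effectiveVotes M κ p =
      2 + (2 * voteLoss M κ p - voteLoss H κ p) / effectiveVotes M κ p ∧
    0 ≤ (2 * voteLoss M κ p - voteLoss H κ p) / effectiveVotes M κ p ∧
    2 ≤ effectiveVotes H κ p / effectiveVotes M κ p
  have hratio := effectiveVotes_div_eq_add_voteLoss_div hvotes hVM.ne'
  have hgain : 2 * effectiveVotes M κ p ≤ effectiveVotes H κ p :=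
    mul_effectiveVotes_le_of_threshold zero_le_two
      (fun x hx => hκ x (mem_union_left M hx)) (fun y hy => hκ y (mem_union_right H hy))
      (fun x hx => (hH x hx).le) hM hvotes
  have hΔ : 0 ≤ (2 * voteLoss M κ p - voteLoss H κ p) / effectiveVotes M κ p := by
    rw [mul_voteLoss_sub_voteLoss hvotes]
    exact div_nonneg (sub_nonneg.mpr hgain) hVM.le
  exact ⟨hratio, hΔ, hratio ▸ le_add_of_nonneg_right hΔ⟩

/-- Lemma 2: if the malicious effective votes `𝒱ᴹ` are positive, the ratio of
honest to malicious effective votes equals `2 + Δ𝓛/𝒱ᴹ` with `Δ𝓛/𝒱ᴹ ≥ 0`;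
in particular the ratio is at least the originally assumed factor of `2`. -/
theorem lemma2_honest_malicious_vote_ratio
    {α : Type*} [DecidableEq α] (H M : Finset α) (hdisj : Disjoint H M)
    (κ p : α → ℝ)
    (hκ : ∀ x ∈ H ∪ M, 0 ≤ κ x)
    (hp0 : ∀ x ∈ H ∪ M, 0 ≤ p x) (hp1 : ∀ x ∈ H ∪ M, p x ≤ 1)
    (t : ℝ) (ht0 : 0 ≤ t) (ht1 : t ≤ 1)
    (hH : ∀ x ∈ H, t < p x) (hM : ∀ y ∈ M, p y ≤ t)
    (hvotes : ∑ x ∈ H, κ x = 2 * ∑ y ∈ M, κ y)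
    (hVM : 0 < ∑ y ∈ M, p y * κ y) :
    (∑ x ∈ H, p x * κ x) / (∑ y ∈ M, p y * κ y) =
        2 + (2 * ((∑ y ∈ M, κ y) - ∑ y ∈ M, p y * κ y) -
              ((∑ x ∈ H, κ x) - ∑ x ∈ H, p x * κ x)) /
            (∑ y ∈ M, p y * κ y) ∧
      0 ≤ (2 * ((∑ y ∈ M, κ y) - ∑ y ∈ M, p y * κ y) -
            ((∑ x ∈ H, κ x) - ∑ x ∈ H, p x * κ x)) /
          (∑ y ∈ M, p y * κ y) ∧
      2 ≤ (∑ x ∈ H, p x * κ x) / (∑ y ∈ M, p y * κ y) :=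
  lemma2_honest_malicious_vote_ratio_general H M κ p hκ t hH hM hvotes hVM
end

section
/- Let H and M be disjoint finite sets with vote counts κ ≥ 0 and reputation scores p ∈ [0,1], separated by a threshold t ∈ [0,1] (p_x > t for x ∈ H, p_y ≤ t for y ∈ M), with Σ_{x∈H} κ_x = 2·Σ_{y∈M} κ_y. Set 𝒱^H = Σ_{x∈H} p_x·κ_x and 𝒱^M = Σ_{y∈M} p_y·κ_y, and suppose 𝒱^H + 𝒱^M > 0. Then 𝒱^H ≥ (2/3)·(𝒱^H + 𝒱^M); that is, after reputation-based attenuation, honest validators still command at least a two-thirds supermajority of the effective votes. -/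
/-- After reputation-based attenuation, honest validators still command at
least a two-thirds supermajority of the effective votes. -/
theorem honest_supermajority_preserved
    {α : Type*} [DecidableEq α] (H M : Finset α) (hdisj : Disjoint H M)
    (κ p : α → ℝ)
    (hκ : ∀ x ∈ H ∪ M, 0 ≤ κ x)
    (hp0 : ∀ x ∈ H ∪ M, 0 ≤ p x) (hp1 : ∀ x ∈ H ∪ M, p x ≤ 1)
    (t : ℝ) (ht0 : 0 ≤ t) (ht1 : t ≤ 1)
    (hH : ∀ x ∈ H, t < p x) (hM : ∀ y ∈ M, p y ≤ t)
    (hvotes : ∑ x ∈ H, κ x = 2 * ∑ y ∈ M, κ y)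
    (hpos : 0 < (∑ x ∈ H, p x * κ x) + ∑ y ∈ M, p y * κ y) :
    ∑ x ∈ H, p x * κ x ≥
      (2 / 3) * ((∑ x ∈ H, p x * κ x) + ∑ y ∈ M, p y * κ y) := by
  have h1 : ∑ x ∈ H, t * κ x ≤ ∑ x ∈ H, p x * κ x := by
    apply Finset.sum_le_sum
    intro x hx
    exact mul_le_mul_of_nonneg_right (le_of_lt (hH x hx))
      (hκ x (Finset.mem_union_left _ hx))
  have h2 : ∑ y ∈ M, p y * κ y ≤ ∑ y ∈ M, t * κ y := by
    apply Finset.sum_le_sum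
    intro y hy
    exact mul_le_mul_of_nonneg_right (hM y hy)
      (hκ y (Finset.mem_union_right _ hy))
  rw [← Finset.mul_sum] at h1 h2
  nlinarith [h1, h2, hvotes, hpos]
end

section
/- Let K be a nonempty finite set (the step (r,s+1) validators) and let V be a finite set with vote counts κ ≥ 0. For each k ∈ K, let p^k : V → [0,1] be validator k's reputation scores, let H_k ∪ M_k = V be a partition with Σ_{x∈H_k} κ_x = 2·Σ_{y∈M_k} κ_y and a threshold t_k ∈ [0,1] satisfying p^k_x > t_k for x ∈ H_k and p^k_y ≤ t_k for y ∈ M_k, and set 𝒱^{k,H} = Σ_{x∈H_k} p^k_x·κ_x, 𝒱^{k,M} = Σ_{y∈M_k} p^k_y·κ_y (assumed positive), and L̂^k = 𝒱^{k,H}/𝒱^{k,M} − 2. Then (1/|K|)·Σ_{k∈K} 𝒱^{k,H}/𝒱^{k,M} = 2 + (1/|K|)·Σ_{k∈K} L̂^k and (1/|K|)·Σ_{k∈K} L̂^k ≥ 0; in particular, the expected ratio of honest to malicious effective validator votes, averaged over the next-step validators, is at least 2. (Corollary 2.) -/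
/-- Corollary 2: averaged over the next-step validators `k ∈ K`, the expected
ratio of honest to malicious effective validator votes equals
`2 + 𝔼(L̂)` where `𝔼(L̂) ≥ 0`; in particular the expected ratio is at least 2. -/
theorem corollary2_expected_vote_ratio
    {ι α : Type*} [DecidableEq α] (K : Finset ι) (hK : K.Nonempty)
    (V : Finset α) (κ : α → ℝ) (hκ : ∀ x ∈ V, 0 ≤ κ x)
    (p : ι → α → ℝ)
    (hp0 : ∀ k ∈ K, ∀ x ∈ V, 0 ≤ p k x)
    (hp1 : ∀ k ∈ K, ∀ x ∈ V, p k x ≤ 1)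
    (H M : ι → Finset α)
    (hpart : ∀ k ∈ K, H k ∪ M k = V)
    (hdisj : ∀ k ∈ K, Disjoint (H k) (M k))
    (t : ι → ℝ) (ht0 : ∀ k ∈ K, 0 ≤ t k) (ht1 : ∀ k ∈ K, t k ≤ 1)
    (hH : ∀ k ∈ K, ∀ x ∈ H k, t k < p k x)
    (hM : ∀ k ∈ K, ∀ y ∈ M k, p k y ≤ t k)
    (hvotes : ∀ k ∈ K, ∑ x ∈ H k, κ x = 2 * ∑ y ∈ M k, κ y)
    (hVM : ∀ k ∈ K, 0 < ∑ y ∈ M k, p k y * κ y) :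
    (∑ k ∈ K, (∑ x ∈ H k, p k x * κ x) / (∑ y ∈ M k, p k y * κ y)) / K.card =
        2 + (∑ k ∈ K,
              ((∑ x ∈ H k, p k x * κ x) / (∑ y ∈ M k, p k y * κ y) - 2)) /
            K.card ∧
      0 ≤ (∑ k ∈ K,
            ((∑ x ∈ H k, p k x * κ x) / (∑ y ∈ M k, p k y * κ y) - 2)) /
          K.card := by
  have hKc : (0:ℝ) < K.card := by exact_mod_cast Finset.card_pos.mpr hK
  have key : ∀ k ∈ K, 2 ≤ (∑ x ∈ H k, p k x * κ x) / (∑ y ∈ M k, p k y * κ y) := by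
    intro k hk
    rw [le_div_iff₀ (hVM k hk)]
    have hHV : ∀ x ∈ H k, x ∈ V := by
      intro x hx; rw [← hpart k hk]; exact Finset.mem_union_left _ hx
    have hMV : ∀ x ∈ M k, x ∈ V := by
      intro x hx; rw [← hpart k hk]; exact Finset.mem_union_right _ hx
    calc 2 * ∑ y ∈ M k, p k y * κ y
        ≤ 2 * ∑ y ∈ M k, t k * κ y := by
          apply mul_le_mul_of_nonneg_left _ (by norm_num)
          exact Finset.sum_le_sum fun y hy =>
            mul_le_mul_of_nonneg_right (hM k hk y hy) (hκ y (hMV y hy))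
      _ = t k * ∑ x ∈ H k, κ x := by
          rw [hvotes k hk, ← Finset.mul_sum]; ring
      _ = ∑ x ∈ H k, t k * κ x := by rw [Finset.mul_sum]
      _ ≤ ∑ x ∈ H k, p k x * κ x := Finset.sum_le_sum fun x hx =>
          mul_le_mul_of_nonneg_right (le_of_lt (hH k hk x hx)) (hκ x (hHV x hx))
  have hsum : 0 ≤ ∑ k ∈ K,
      ((∑ x ∈ H k, p k x * κ x) / (∑ y ∈ M k, p k y * κ y) - 2) :=
    Finset.sum_nonneg fun k hk => by linarith [key k hk]
  constructor
  · rw [Finset.sum_sub_distrib, Finset.sum_const, nsmul_eq_mul]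
    field_simp
    ring
  · exact div_nonneg hsum hKc.le
end

section
/- Let V be a finite set of block proposers with positive credential values Θ : V → ℝ and reputation scores p : V → (0,1], and let p_th ∈ (0,1] be a threshold. Let i ∈ V be a malicious proposer with the best credentials among the malicious proposers, i.e. p_i ≤ p_th and Θ_i ≤ Θ_m for every m ∈ V with p_m ≤ p_th. Let k ∈ V be an honest proposer (p_k > p_th) whose reputation satisfies p_k > C_{i,k} · p_th, where C_{i,k} = Θ_k/Θ_i is the compensation factor of k relative to i. Then Θ_k/p_k < Θ_m/p_m for every malicious proposer m ∈ V (every m with p_m ≤ p_th); hence an honest validator using these reputation scores selects a non-empty block from an honest proposer and rejects the empty block with absolute surety. (Corollary 3.) -/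
/-- Corollary 3: if the honest proposer `k` has reputation exceeding
`C_{i,k}·p_th` where `i` is the best-credentialed malicious proposer, then `k`
beats every malicious proposer in the reputation-weighted credential ordering,
so the honest validator rejects the empty block with absolute surety. -/
theorem corollary3_reject_empty_block
    {α : Type*} (V : Finset α) (Θ p : α → ℝ)
    (hΘ : ∀ x ∈ V, 0 < Θ x)
    (hp0 : ∀ x ∈ V, 0 < p x) (hp1 : ∀ x ∈ V, p x ≤ 1)
    (pth : ℝ) (hpth0 : 0 < pth) (hpth1 : pth ≤ 1)
    (i : α) (hi : i ∈ V) (hiMal : p i ≤ pth)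
    (hiBest : ∀ m ∈ V, p m ≤ pth → Θ i ≤ Θ m)
    (k : α) (hk : k ∈ V) (hkHon : pth < p k)
    (hkRep : p k > (Θ k / Θ i) * pth) :
    ∀ m ∈ V, p m ≤ pth → Θ k / p k < Θ m / p m := by
  intro m hm hmMal
  have hΘi := hΘ i hi
  have hΘk := hΘ k hk
  have hΘm := hΘ m hm
  have hpk := hp0 k hk
  have hpm := hp0 m hm
  have h1 : Θ k / p k < Θ i / pth := by
    rw [div_lt_div_iff₀ hpk hpth0]
    have hdiv : Θ k / Θ i * Θ i = Θ k := div_mul_cancel₀ _ (ne_of_gt hΘi)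
    nlinarith [hkRep, mul_lt_mul_of_pos_left hkRep hΘi]
  have h2 : Θ i / pth ≤ Θ m / p m := by
    rw [div_le_div_iff₀ hpth0 hpm]
    have := hiBest m hm hmMal
    nlinarith
  linarith
end

section
/- Let V be a finite set of block proposers with positive credential values Θ : V → ℝ and reputation scores p : V → (0,1], and let p_th ∈ (0,1] be a threshold. Let i ∈ V be a malicious proposer (p_i ≤ p_th) having the highest credentials, i.e. Θ_i ≤ Θ_x for all x ∈ V, so that without reputation scores the validator would select i's block. If there exists an honest proposer k ∈ V with p_k > C_{i,k} · p_th, where C_{i,k} = Θ_k/Θ_i, then Θ_k/p_k < Θ_i/p_i; hence even an honest but unaware validator using reputation scores rejects the malicious proposer's block with absolute surety in favor of k's block. (Corollary 4.) -/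
/-- Corollary 4: if the malicious proposer `i` has the highest credentials
(minimal `Θ`) but there is an honest proposer `k` with `p k > C_{i,k}·p_th`,
then `Θ k / p k < Θ i / p i`, so even an honest-but-unaware validator rejects
the malicious proposer's block with absolute surety in favor of `k`'s block. -/
theorem corollary4_reject_malicious_block
    {α : Type*} (V : Finset α) (Θ p : α → ℝ)
    (hΘ : ∀ x ∈ V, 0 < Θ x)
    (hp0 : ∀ x ∈ V, 0 < p x) (hp1 : ∀ x ∈ V, p x ≤ 1)
    (pth : ℝ) (hpth0 : 0 < pth) (hpth1 : pth ≤ 1)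
    (i : α) (hi : i ∈ V) (hiMal : p i ≤ pth)
    (hiBest : ∀ x ∈ V, Θ i ≤ Θ x)
    (k : α) (hk : k ∈ V) (hkHon : pth < p k)
    (hkRep : p k > (Θ k / Θ i) * pth) :
    Θ k / p k < Θ i / p i := by
  have hΘi := hΘ i hi
  have hΘk := hΘ k hk
  have hpi := hp0 i hi
  have hpk := hp0 k hk
  rw [div_lt_div_iff₀ hpk hpi]
  have h1 : (Θ k / Θ i) * p i ≤ (Θ k / Θ i) * pth :=
    mul_le_mul_of_nonneg_left hiMal (by positivity)
  have h2 : (Θ k / Θ i) * p i < p k := lt_of_le_of_lt h1 hkRep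
  calc Θ k * p i = ((Θ k / Θ i) * p i) * Θ i := by field_simp
    _ < p k * Θ i := by exact mul_lt_mul_of_pos_right h2 hΘi
    _ = Θ i * p k := mul_comm _ _
end
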